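/- Let σ be a primitive substitution whose subshift X_σ is periodic, i.e., X_σ is the finite orbit of a periodic word w^ω. Then the Perron eigenvalue of the incidence matrix M_σ is a positive integer, and ab(w) is a corresponding eigenvector. -/

import Mathlib

open Matrix

/-- `n`-th iterate of the substitution `σ` applied to the letter `a`. -/
def substIter {A : Type*} (σ : A → List A) (n : ℕ) (a : A) : List A :=
  (fun l => l.flatMap σ)^[n] [a]

/-- The language of a substitution: factors of the words `σ^n(a)`. -/
def langSubst {A : Type*} (σ : A → List A) : Set (List A) :=
  {w | ∃ (a : A) (n : ℕ), w <:+: substIter σ n a}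

/-- A substitution is primitive if it is non-erasing and some iterate of every letter
contains every letter. -/
def IsPrimitive {A : Type*} (σ : A → List A) : Prop :=
  (∀ a, σ a ≠ []) ∧ ∃ n : ℕ, ∀ a b : A, b ∈ substIter σ n a

/-- The factor of `x` of length `l` starting at position `k`. -/
def factorN {A : Type*} (x : ℕ → A) (k l : ℕ) : List A := (List.range l).map (fun i => x (k + i))

/-- The (one-sided) subshift of a substitution: infinite words all of whose factors belong
to the language of the substitution. -/
def subshiftOf {A : Type*} (σ : A → List A) : Set (ℕ → A) :=
  {x | ∀ k l : ℕ, factorN x k l ∈ langSubst σ}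

/-- The rational incidence matrix of a substitution: `M a b = |σ(b)|_a`. -/
def incidenceQ {A : Type*} [DecidableEq A] (σ : A → List A) : Matrix A A ℚ :=
  fun a b => ((σ b).count a : ℚ)

open Matrix

section
variable {A : Type*}

/-- Periodicity of an infinite word. -/
def HasPer (x : ℕ → A) (t : ℕ) : Prop := ∀ i, x (i + t) = x i

lemma HasPer.mul {x : ℕ → A} {t : ℕ} (h : HasPer x t) (m : ℕ) : ∀ i, x (i + m * t) = x i := by
  intro i
  induction m with
  | zero => simp
  | succ m ih => rw [Nat.succ_mul, ← Nat.add_assoc, h (i + m*t), ih]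

lemma bezout_nat {s t : ℕ} (hs : 0 < s) (ht : 0 < t) :
    ∃ m n : ℕ, m * s = Nat.gcd s t + n * t := by
  have h : (Nat.gcd s t : ℤ) = s * Nat.gcdA s t + t * Nat.gcdB s t := Nat.gcd_eq_gcd_ab s t
  set a : ℤ := Nat.gcdA s t
  set b : ℤ := Nat.gcdB s t
  set k : ℤ := |a| + |b|
  have ht' : (1:ℤ) ≤ t := by exact_mod_cast ht
  have hs' : (1:ℤ) ≤ s := by exact_mod_cast hs
  have hknn : 0 ≤ k := by positivity
  have hkt : k * 1 ≤ k * t := by exact mul_le_mul_of_nonneg_left ht' hknn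
  have hks : k * 1 ≤ k * s := by exact mul_le_mul_of_nonneg_left hs' hknn
  have hk1 : 0 ≤ a + k * t := by
    have := neg_abs_le a; have := abs_nonneg b
    simp only [k] at hkt ⊢; linarith
  have hk2 : 0 ≤ k * s - b := by
    have := le_abs_self b; have := abs_nonneg a
    simp only [k] at hks ⊢; linarith
  refine ⟨(a + k * t).toNat, (k * s - b).toNat, ?_⟩
  have : ((a + k * t).toNat : ℤ) * s = Nat.gcd s t + ((k * s - b).toNat : ℤ) * t := by
    rw [Int.toNat_of_nonneg hk1, Int.toNat_of_nonneg hk2]; linarith [h]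
  exact_mod_cast this

lemma hasPer_gcd {x : ℕ → A} {s t : ℕ} (hs : 0 < s) (ht : 0 < t)
    (hxs : HasPer x s) (hxt : HasPer x t) : HasPer x (Nat.gcd s t) := by
  obtain ⟨m, n, hmn⟩ := bezout_nat hs ht
  intro i
  have h1 : x (i + Nat.gcd s t + n * t) = x (i + Nat.gcd s t) := hxt.mul n _
  have h2 : x (i + m * s) = x i := hxs.mul m _
  rw [← h1, ← h2]
  congr 1
  omega

end


section
variable {A : Type*}

def wpow (u : List A) (m : ℕ) : List A := (List.replicate m u).flatten

def perWord [Inhabited A] (u : List A) : ℕ → A := fun i => u.getD (i % u.length) default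

lemma wpow_succ (u : List A) (m : ℕ) : wpow u (m+1) = u ++ wpow u m := by
  simp [wpow, List.replicate_succ]

lemma length_wpow (u : List A) (m : ℕ) : (wpow u m).length = m * u.length := by
  induction m with
  | zero => simp [wpow]
  | succ m ih => rw [wpow_succ]; simp [ih, Nat.succ_mul]; ring

lemma getD_wpow (u : List A) (d : A) {m i : ℕ} (h : i < m * u.length) :
    (wpow u m).getD i d = u.getD (i % u.length) d := by
  induction m generalizing i with
  | zero => omega
  | succ m ih =>
    rw [wpow_succ]
    rw [Nat.succ_mul] at h
    rcases lt_or_ge i u.length with hi | hi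
    · rw [List.getD_append _ _ _ _ hi, Nat.mod_eq_of_lt hi]
    · rw [List.getD_append_right _ _ _ _ hi, ih (by omega), Nat.mod_eq_sub_mod hi]

lemma hasPer_perWord [Inhabited A] (u : List A) : HasPer (perWord u) u.length := by
  intro i; simp [perWord, Nat.add_mod_right]

@[simp] lemma length_factorN (x : ℕ → A) (k l : ℕ) : (factorN x k l).length = l := by
  simp [factorN]

lemma getElem_factorN (x : ℕ → A) (k l i : ℕ) (h : i < (factorN x k l).length) :
    (factorN x k l)[i] = x (k + i) := by
  simp [factorN]

lemma factorN_add (x : ℕ → A) (k l₁ l₂ : ℕ) :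
    factorN x k (l₁ + l₂) = factorN x k l₁ ++ factorN x (k + l₁) l₂ := by
  apply List.ext_getElem
  · simp
  · intro n h1 h2
    rw [getElem_factorN]
    rcases lt_or_ge n l₁ with hn | hn
    · rw [List.getElem_append_left (by simpa using hn), getElem_factorN]
    · rw [List.getElem_append_right (by simpa using hn), getElem_factorN]
      simp only [length_factorN]
      congr 1
      omega

lemma factorN_eq_of_getD (x : ℕ → A) (v : List A) (d : A) (k l : ℕ)
    (hkl : k + l ≤ v.length) (hx : ∀ i, i < l → x (k + i) = v.getD (k + i) d) :
    factorN x k l = (v.drop k).take l := by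
  apply List.ext_getElem
  · simp; omega
  · intro n h1 h2
    rw [getElem_factorN, List.getElem_take, List.getElem_drop, hx n (by simpa using h1),
      List.getD_eq_getElem]

lemma factorN_infix_of_getD (x : ℕ → A) (v : List A) (d : A) (k l : ℕ)
    (hkl : k + l ≤ v.length) (hx : ∀ i, i < l → x (k + i) = v.getD (k + i) d) :
    factorN x k l <:+: v := by
  rw [factorN_eq_of_getD x v d k l hkl hx]
  exact ((v.drop k).take_prefix l).isInfix.trans (v.drop_suffix k).isInfix

lemma factorN_perWord_infix_wpow [Inhabited A] (u : List A) {k l m : ℕ}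
    (h : k + l ≤ m * u.length) : factorN (perWord u) k l <:+: wpow u m := by
  apply factorN_infix_of_getD _ _ default
  · rw [length_wpow]; exact h
  · intro i hi
    rw [getD_wpow u default (by omega)]
    rfl

lemma factorN_perWord_eq_wpow [Inhabited A] (u : List A) (m : ℕ) :
    factorN (perWord u) 0 (m * u.length) = wpow u m := by
  rw [factorN_eq_of_getD (perWord u) (wpow u m) default 0 (m * u.length)
    (by rw [length_wpow]; omega) (fun i hi => by
      rw [getD_wpow u default (by omega)]; rfl)]
  simp [List.take_of_length_le, length_wpow]

lemma factorN_perWord_self [Inhabited A] (u : List A) :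
    factorN (perWord u) 0 u.length = u := by
  have := factorN_perWord_eq_wpow u 1
  rw [one_mul] at this
  simpa [wpow] using this

end

section
variable {A : Type*} {σ : A → List A}

lemma iterate_flatMap_append (σ : A → List A) (n : ℕ) (s t : List A) :
    (fun l => l.flatMap σ)^[n] (s ++ t) =
      (fun l => l.flatMap σ)^[n] s ++ (fun l => l.flatMap σ)^[n] t := by
  induction n generalizing s t with
  | zero => simp
  | succ n ih => simp only [Function.iterate_succ_apply, List.flatMap_append]; exact ih _ _

lemma iterate_flatMap_nil (σ : A → List A) (n : ℕ) :
    (fun l => l.flatMap σ)^[n] ([] : List A) = [] := by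
  induction n with
  | zero => rfl
  | succ n ih => simp only [Function.iterate_succ_apply, List.flatMap_nil]; exact ih

lemma mem_lang_of_infix {u v : List A} (h : u <:+: v) (hv : v ∈ langSubst σ) :
    u ∈ langSubst σ := by
  obtain ⟨a, n, hn⟩ := hv
  exact ⟨a, n, h.trans hn⟩

lemma lang_flatMap {v : List A} (hv : v ∈ langSubst σ) : v.flatMap σ ∈ langSubst σ := by
  obtain ⟨a, n, s, t, hst⟩ := hv
  refine ⟨a, n + 1, s.flatMap σ, t.flatMap σ, ?_⟩
  have : substIter σ (n+1) a = (substIter σ n a).flatMap σ := by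
    rw [substIter, substIter, Function.iterate_succ_apply']
  rw [this, ← hst]
  simp [List.flatMap_append]

lemma lang_iterate_flatMap {v : List A} (hv : v ∈ langSubst σ) (n : ℕ) :
    (fun l => l.flatMap σ)^[n] v ∈ langSubst σ := by
  induction n with
  | zero => exact hv
  | succ n ih =>
    rw [Function.iterate_succ_apply']
    exact lang_flatMap ih

lemma iterate_flatMap_wpow (σ : A → List A) (n m : ℕ) (u : List A) :
    (fun l => l.flatMap σ)^[n] (wpow u m) = wpow ((fun l => l.flatMap σ)^[n] u) m := by
  induction m with
  | zero => simpa [wpow] using iterate_flatMap_nil σ n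
  | succ m ih => rw [wpow_succ, wpow_succ, iterate_flatMap_append, ih]

lemma length_le_length_flatMap (hne : ∀ a, σ a ≠ []) (l : List A) :
    l.length ≤ (l.flatMap σ).length := by
  induction l with
  | nil => simp
  | cons c l ih =>
    have : 1 ≤ (σ c).length := List.length_pos_iff.mpr (hne c)
    simp only [List.flatMap_cons, List.length_append, List.length_cons]
    omega

lemma length_le_iterate_flatMap (hne : ∀ a, σ a ≠ []) (n : ℕ) (l : List A) :
    l.length ≤ ((fun l => l.flatMap σ)^[n] l).length := by
  induction n with
  | zero => simp
  | succ n ih =>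
    rw [Function.iterate_succ_apply']
    exact ih.trans (length_le_length_flatMap hne _)

lemma subshift_perWord [Inhabited A] {u : List A} (hu : u ≠ [])
    (h : ∀ m, wpow u m ∈ langSubst σ) : perWord u ∈ subshiftOf σ := by
  intro k l
  have hlen : 0 < u.length := List.length_pos_iff.mpr hu
  have : k + l ≤ (k + l + 1) * u.length := by nlinarith
  exact mem_lang_of_infix (factorN_perWord_infix_wpow u this) (h (k + l + 1))

end

section
variable {A : Type*} [DecidableEq A]

lemma factorN_one (x : ℕ → A) (k : ℕ) : factorN x k 1 = [x k] := by
  simp [factorN, List.range_succ]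

lemma count_factorN_shift {x : ℕ → A} {g : ℕ} (hg : HasPer x g) (a : A) (k : ℕ) :
    (factorN x (k+1) g).count a = (factorN x k g).count a := by
  have e1 : factorN x k (1 + g) = factorN x k 1 ++ factorN x (k + 1) g := factorN_add x k 1 g
  have e2 : factorN x k (g + 1) = factorN x k g ++ factorN x (k + g) 1 := factorN_add x k g 1
  rw [Nat.add_comm 1 g, e2] at e1
  have e3 : factorN x (k + g) 1 = factorN x k 1 := by
    rw [factorN_one, factorN_one, hg k]
  rw [e3] at e1
  have := congrArg (List.count a) e1
  simp only [List.count_append] at this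
  omega

lemma count_factorN_const {x : ℕ → A} {g : ℕ} (hg : HasPer x g) (a : A) (k : ℕ) :
    (factorN x k g).count a = (factorN x 0 g).count a := by
  induction k with
  | zero => rfl
  | succ k ih => rw [count_factorN_shift hg a k, ih]

lemma count_factorN_mul {x : ℕ → A} {g : ℕ} (hg : HasPer x g) (a : A) (k m : ℕ) :
    (factorN x k (m * g)).count a = m * (factorN x 0 g).count a := by
  induction m generalizing k with
  | zero => simp [factorN]
  | succ m ih =>
    have : (m + 1) * g = g + m * g := by ring
    rw [this, factorN_add, List.count_append, ih (k + g), count_factorN_const hg a k,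
      Nat.succ_mul]
    ring

variable [Fintype A]

lemma count_flatMap_sum (σ : A → List A) (l : List A) (a : A) :
    (l.flatMap σ).count a = ∑ b, (σ b).count a * l.count b := by
  induction l with
  | nil => simp
  | cons c l ih =>
    rw [List.flatMap_cons, List.count_append, ih]
    have : ∀ b, (σ b).count a * (c :: l).count b
        = (σ b).count a * l.count b + (if b = c then (σ c).count a else 0) := by
      intro b
      rcases eq_or_ne b c with h | h
      · subst h; rw [List.count_cons_self, if_pos rfl]; ring
      · rw [List.count_cons_of_ne h.symm, if_neg h]; ring
    rw [Finset.sum_congr rfl (fun b _ => this b), Finset.sum_add_distrib,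
      Finset.sum_ite_eq' Finset.univ c (fun _ => (σ c).count a)]
    simp [Nat.add_comm]

lemma length_flatMap_sum (σ : A → List A) (l : List A) :
    (l.flatMap σ).length = ∑ b, (σ b).length * l.count b := by
  induction l with
  | nil => simp
  | cons c l ih =>
    rw [List.flatMap_cons, List.length_append, ih]
    have : ∀ b, (σ b).length * (c :: l).count b
        = (σ b).length * l.count b + (if b = c then (σ c).length else 0) := by
      intro b
      rcases eq_or_ne b c with h | h
      · subst h; rw [List.count_cons_self, if_pos rfl]; ring
      · rw [List.count_cons_of_ne h.symm, if_neg h]; ring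
    rw [Finset.sum_congr rfl (fun b _ => this b), Finset.sum_add_distrib,
      Finset.sum_ite_eq' Finset.univ c (fun _ => (σ c).length)]
    simp [Nat.add_comm]

end

/-- If a primitive substitution has a periodic subshift — the (finite) orbit of the
periodic word `w^ω` — then the Perron eigenvalue of its incidence matrix is a positive
integer, `ab(w)` is a corresponding eigenvector, and every complex eigenvalue has modulus
at most this integer. -/
theorem perron_eigenvalue_of_periodic_primitive
    {A : Type*} [Fintype A] [DecidableEq A] [Inhabited A]
    (σ : A → List A) (hprim : IsPrimitive σ)
    (w : List A) (hw : w ≠ [])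
    (hper : subshiftOf σ =
      {x : ℕ → A | ∃ k : ℕ, ∀ i : ℕ, x i = w.getD ((i + k) % w.length) default}) :
    ∃ lam : ℕ, 0 < lam ∧
      (incidenceQ σ).mulVec (fun a => (w.count a : ℚ)) =
        (lam : ℚ) • (fun a => (w.count a : ℚ)) ∧
      ∀ μ : ℂ, (((incidenceQ σ).map (fun q => (q : ℂ))).charpoly).IsRoot μ →
        ‖μ‖ ≤ lam := by
  classical
  obtain ⟨hne, N, hN⟩ := hprim
  have hp : 0 < w.length := List.length_pos_iff.mpr hw
  set p := w.length with hpdef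
  set x₀ : ℕ → A := perWord w with hx0def
  have hx0mem : x₀ ∈ subshiftOf σ := by
    rw [hper]
    exact ⟨0, fun i => by simp [hx0def, perWord]; rfl⟩
  have hx0p : HasPer x₀ p := hasPer_perWord w
  have hwpow_lang : ∀ m, wpow w m ∈ langSubst σ := by
    intro m
    have h := hx0mem 0 (m * p)
    rwa [show factorN x₀ 0 (m * p) = wpow w m from factorN_perWord_eq_wpow w m] at h
  -- least period
  have hex : ∃ n, 0 < n ∧ HasPer x₀ n := ⟨p, hp, hx0p⟩
  set g := Nat.find hex with hgdef
  obtain ⟨hgpos, hgper⟩ : 0 < g ∧ HasPer x₀ g := Nat.find_spec hex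
  have hgdvd : ∀ q, 0 < q → HasPer x₀ q → g ∣ q := by
    intro q hq hxq
    have hγ : HasPer x₀ (Nat.gcd q g) := hasPer_gcd hq hgpos hxq hgper
    have hγpos : 0 < Nat.gcd q g := Nat.gcd_pos_of_pos_right _ hgpos
    have hle : g ≤ Nat.gcd q g := Nat.find_min' hex ⟨hγpos, hγ⟩
    have : Nat.gcd q g = g :=
      le_antisymm (Nat.le_of_dvd hgpos (Nat.gcd_dvd_right q g)) hle
    rw [← this]
    exact Nat.gcd_dvd_left q g
  -- the minimal period word u
  set u : List A := factorN x₀ 0 g with hudef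
  have hulen : u.length = g := by rw [hudef, length_factorN]
  have hune : u ≠ [] := by
    intro h
    rw [h] at hulen
    simp at hulen
    omega
  have hx0u : x₀ = perWord u := by
    funext i
    have h2 : i % g < u.length := by rw [hulen]; exact Nat.mod_lt _ hgpos
    have h3 : perWord u i = u[i % g] := by
      rw [perWord, hulen, List.getD_eq_getElem _ _ h2]
    have h4 : u[i % g] = x₀ (0 + i % g) :=
      getElem_factorN x₀ 0 g (i % g) (by simp only [length_factorN]; omega)
    rw [h3, h4, Nat.zero_add]
    conv_lhs => rw [show i = i % g + (i / g) * g from (Nat.mod_add_div' i g).symm]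
    exact hgper.mul (i / g) (i % g)
  have hupow_lang : ∀ m, wpow u m ∈ langSubst σ := by
    intro m
    have h := hx0mem 0 (m * g)
    have e : factorN x₀ 0 (m * g) = wpow u m := by
      conv_lhs => rw [hx0u, ← hulen]
      exact factorN_perWord_eq_wpow u m
    rwa [e] at h
  -- the main structural result about iterates
  have main : ∀ (v : List A), v ≠ [] → (∀ m, wpow v m ∈ langSubst σ) → ∀ n : ℕ,
      (∀ b ∈ (fun l => l.flatMap σ)^[n] v, b ∈ w) ∧
      g ∣ ((fun l => l.flatMap σ)^[n] v).length ∧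
      (∀ a, ((fun l => l.flatMap σ)^[n] v).count a
          = (((fun l => l.flatMap σ)^[n] v).length / g) * u.count a) := by
    intro v hv hvlang n
    set vn := (fun l => l.flatMap σ)^[n] v with hvndef
    have hL : 0 < vn.length :=
      lt_of_lt_of_le (List.length_pos_iff.mpr hv) (length_le_iterate_flatMap hne n v)
    have hvnne : vn ≠ [] := by
      intro h
      rw [h] at hL
      simp at hL
    have hsub : perWord vn ∈ subshiftOf σ := by
      apply subshift_perWord hvnne
      intro m
      rw [hvndef, ← iterate_flatMap_wpow]
      exact lang_iterate_flatMap (hvlang m) n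
    rw [hper] at hsub
    obtain ⟨k, hk⟩ := hsub
    have hkx : ∀ i, perWord vn i = x₀ (i + k) := by
      intro i
      rw [hk i]
      simp [hx0def, perWord]; rfl
    have hvnper : HasPer (perWord vn) vn.length := hasPer_perWord vn
    have hx0vn : HasPer x₀ vn.length := by
      intro j
      have hkp : k ≤ j + k * p := by nlinarith [hp]
      set i := j + k * p - k with hidef
      calc x₀ (j + vn.length) = x₀ (j + vn.length + k * p) := (hx0p.mul k _).symm
        _ = x₀ ((i + vn.length) + k) := by congr 1; omega
        _ = perWord vn (i + vn.length) := (hkx _).symm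
        _ = perWord vn i := hvnper i
        _ = x₀ (i + k) := hkx i
        _ = x₀ (j + k * p) := by congr 1; omega
        _ = x₀ j := hx0p.mul k j
    have hdL : g ∣ vn.length := hgdvd _ hL hx0vn
    have hvfe : factorN (perWord vn) 0 vn.length = vn := factorN_perWord_self vn
    refine ⟨?_, hdL, ?_⟩
    · intro b hb
      obtain ⟨i, hi, hbi⟩ := List.mem_iff_getElem.mp hb
      have h4 : vn[i] = perWord vn (0 + i) := by
        rw [List.getElem_of_eq hvfe.symm hi]
        exact getElem_factorN (perWord vn) 0 vn.length i (by simpa using hi)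
      rw [h4, hk] at hbi
      have h5 : (0 + i + k) % p < p := Nat.mod_lt _ hp
      rw [List.getD_eq_getElem _ _ (by rw [← hpdef]; exact h5)] at hbi
      rw [← hbi]
      exact List.getElem_mem _
    · intro a
      have e1 : factorN (perWord vn) 0 vn.length = factorN x₀ k vn.length := by
        apply List.ext_getElem (by simp)
        intro m h1 h2
        rw [getElem_factorN, getElem_factorN, hkx]
        congr 1
        omega
      have e2 : (vn.length / g) * g = vn.length := Nat.div_mul_cancel hdL
      calc vn.count a = (factorN x₀ k vn.length).count a :=
            congrArg (List.count a) (hvfe.symm.trans e1)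
        _ = (factorN x₀ k ((vn.length / g) * g)).count a := by rw [e2]
        _ = (vn.length / g) * (factorN x₀ 0 g).count a := count_factorN_mul hgper a k _
        _ = (vn.length / g) * u.count a := by rw [← hudef]
  -- every letter occurs in w
  have hwfull : ∀ b : A, b ∈ w := by
    intro b
    obtain ⟨a₀, ha₀⟩ := List.exists_mem_of_ne_nil u hune
    obtain ⟨s, t, hst⟩ := List.append_of_mem ha₀
    have h2 : (fun l => l.flatMap σ)^[N] u
        = (fun l => l.flatMap σ)^[N] s ++ (substIter σ N a₀ ++ (fun l => l.flatMap σ)^[N] t) := by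
      rw [hst, show (a₀ :: t) = [a₀] ++ t from rfl, iterate_flatMap_append,
        iterate_flatMap_append]
      rfl
    have hb : b ∈ (fun l => l.flatMap σ)^[N] u := by
      rw [h2]
      simp only [List.mem_append]
      exact Or.inr (Or.inl (hN a₀ b))
    exact (main u hune hupow_lang N).1 b hb
  -- counts of w
  have hwcnt : ∀ a, w.count a = (p / g) * u.count a := by
    intro a
    have h := (main w hw hwpow_lang 0).2.2 a
    simpa using h
  -- counts of σ(u)
  have hu1 := main u hune hupow_lang 1
  set q₁ := (u.flatMap σ).length with hq1def
  have hq1iter : ((fun l => l.flatMap σ)^[1] u) = u.flatMap σ := by rw [Function.iterate_one]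
  have hgq1 : g ∣ q₁ := by
    have := hu1.2.1
    rwa [hq1iter] at this
  have hucnt : ∀ a, (u.flatMap σ).count a = (q₁ / g) * u.count a := by
    intro a
    have h := hu1.2.2 a
    rwa [hq1iter] at h
  set lam := q₁ / g with hlamdef
  have hq1g : g ≤ q₁ := by
    calc g = u.length := hulen.symm
      _ ≤ (u.flatMap σ).length := length_le_length_flatMap hne u
  have hlampos : 0 < lam := Nat.le_div_iff_mul_le hgpos |>.mpr (by omega)
  -- the key counting identity
  have hkey : ∀ a, (w.flatMap σ).count a = lam * w.count a := by
    intro a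
    calc (w.flatMap σ).count a = ∑ b, (σ b).count a * w.count b := count_flatMap_sum σ w a
      _ = ∑ b, (σ b).count a * ((p / g) * u.count b) := by
          exact Finset.sum_congr rfl fun b _ => by rw [hwcnt b]
      _ = (p / g) * ∑ b, (σ b).count a * u.count b := by
          rw [Finset.mul_sum]
          exact Finset.sum_congr rfl fun b _ => by ring
      _ = (p / g) * (u.flatMap σ).count a := by rw [count_flatMap_sum σ u a]
      _ = (p / g) * (lam * u.count a) := by rw [hucnt a, hlamdef]
      _ = lam * ((p / g) * u.count a) := by ring
      _ = lam * w.count a := by rw [← hwcnt a]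
  refine ⟨lam, hlampos, ?_, ?_⟩
  · funext a
    have h1 : (∑ b, ((σ b).count a : ℚ) * (w.count b : ℚ)) = ((w.flatMap σ).count a : ℚ) := by
      rw [count_flatMap_sum σ w a]
      push_cast
      rfl
    have h2 : ((w.flatMap σ).count a : ℚ) = (lam : ℚ) * (w.count a : ℚ) := by
      exact_mod_cast congrArg (fun n : ℕ => (n : ℚ)) (hkey a)
    simp only [Matrix.mulVec, dotProduct, incidenceQ, Pi.smul_apply, smul_eq_mul]
    rw [h1, h2]
  · intro μ hroot
    set Mc := (incidenceQ σ).map (fun q : ℚ => (q : ℂ)) with hMcdef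
    have hdet : ((Matrix.scalar A μ) - Mc).det = 0 := by
      have h := hroot
      rw [Polynomial.IsRoot, Matrix.charpoly, eval_det,
        Matrix.matPolyEquiv_charmatrix, Polynomial.eval_sub, Polynomial.eval_X,
        Polynomial.eval_C] at h
      exact h
    obtain ⟨z, hz0, hzeq⟩ := Matrix.exists_mulVec_eq_zero_iff.mpr hdet
    have hMz : Mc.mulVec z = μ • z := by
      have h1 : (Matrix.scalar A μ).mulVec z = Mc.mulVec z :=
        sub_eq_zero.mp (by rw [← Matrix.sub_mulVec]; exact hzeq)
      rw [← h1]
      funext b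
      rw [Matrix.scalar_apply, Matrix.mulVec_diagonal]
      simp
    have hwcR : ∀ b, (0:ℝ) < (w.count b : ℝ) := fun b => by
      exact_mod_cast List.count_pos_iff.mpr (hwfull b)
    set f : A → ℝ := fun b => ‖z b‖ / (w.count b : ℝ) with hfdef
    obtain ⟨a, -, hamax⟩ := Finset.exists_max_image Finset.univ f ⟨default, Finset.mem_univ _⟩
    have hfb : ∀ b, ‖z b‖ ≤ f a * (w.count b : ℝ) := by
      intro b
      have h := hamax b (Finset.mem_univ b)
      calc ‖z b‖ = (‖z b‖ / (w.count b : ℝ)) * (w.count b : ℝ) :=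
            (div_mul_cancel₀ _ (ne_of_gt (hwcR b))).symm
        _ ≤ f a * (w.count b : ℝ) := mul_le_mul_of_nonneg_right h (hwcR b).le
    have hza : f a * (w.count a : ℝ) = ‖z a‖ := by
      rw [hfdef]
      exact div_mul_cancel₀ _ (ne_of_gt (hwcR a))
    have hzapos : 0 < ‖z a‖ := by
      obtain ⟨b, hb⟩ := Function.ne_iff.mp hz0
      have hfbpos : 0 < f b := div_pos (norm_pos_iff.mpr hb) (hwcR b)
      have hfapos : 0 < f a := lt_of_lt_of_le hfbpos (hamax b (Finset.mem_univ b))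
      rw [← hza]
      exact mul_pos hfapos (hwcR a)
    have hMba : ∀ b, ‖Mc a b‖ = (((σ b).count a : ℕ) : ℝ) := by
      intro b
      rw [hMcdef]
      simp only [Matrix.map_apply, incidenceQ]
      rw [show (((((σ b).count a : ℕ) : ℚ)) : ℂ) = (((σ b).count a : ℕ) : ℂ) by push_cast; rfl]
      exact Complex.norm_natCast _
    have est : ‖μ‖ * ‖z a‖ ≤ (lam : ℝ) * ‖z a‖ := by
      have h0 : (Mc.mulVec z) a = μ * z a := by rw [hMz]; simp
      have h1 : ‖μ‖ * ‖z a‖ = ‖(Mc.mulVec z) a‖ := by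
        rw [h0, norm_mul]
      rw [h1]
      have h2 : ‖(Mc.mulVec z) a‖ ≤ ∑ b, (((σ b).count a : ℕ) : ℝ) * ‖z b‖ := by
        have : (Mc.mulVec z) a = ∑ b, Mc a b * z b := by
          simp [Matrix.mulVec, dotProduct]
        rw [this]
        refine le_trans (norm_sum_le _ _) ?_
        refine le_of_eq (Finset.sum_congr rfl fun b _ => ?_)
        rw [norm_mul, hMba b]
      refine h2.trans ?_
      calc ∑ b, (((σ b).count a : ℕ) : ℝ) * ‖z b‖
          ≤ ∑ b, (((σ b).count a : ℕ) : ℝ) * (f a * (w.count b : ℝ)) :=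
            Finset.sum_le_sum fun b _ =>
              mul_le_mul_of_nonneg_left (hfb b) (by positivity)
        _ = f a * ∑ b, (((σ b).count a : ℕ) : ℝ) * ((w.count b : ℕ) : ℝ) := by
            rw [Finset.mul_sum]
            exact Finset.sum_congr rfl fun b _ => by ring
        _ = f a * ((lam : ℝ) * ((w.count a : ℕ) : ℝ)) := by
            congr 1
            have e3 : (∑ b, (((σ b).count a : ℕ) : ℝ) * ((w.count b : ℕ) : ℝ))
                = (((w.flatMap σ).count a : ℕ) : ℝ) := by
              rw [count_flatMap_sum σ w a]
              push_cast
              rfl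
            rw [e3, hkey a]
            push_cast
            ring
        _ = (lam : ℝ) * (f a * ((w.count a : ℕ) : ℝ)) := by ring
        _ = (lam : ℝ) * ‖z a‖ := by rw [hza]
    exact le_of_mul_le_mul_right est hzapos
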